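/- arXiv:2203.11735 — 2 statements merged into one kernel-verified Lean document; each statement's English description precedes it below -/
import Mathlib

section
/- Let u₁, u₂ ∈ L²(Ω;ℝᵈ) and let κ₁, κ₂ : Ω → ℝ be measurable with κᵢ ≥ κ_min > 0 almost everywhere (i = 1,2). If ∫_Ω κ₂⁻¹ u₂·u₁ dμ = ∫_Ω κ₂⁻¹ |u₂|² dμ and ∫_Ω κ₁⁻¹ u₁·u₂ dμ = ∫_Ω κ₁⁻¹ |u₁|² dμ, then ‖κ₁^{-1/2} u₁ − κ₂^{-1/2} u₂‖²_{L²(Ω;ℝᵈ)} ≤ ‖κ₁^{-1/2} − κ₂^{-1/2}‖²_{L^∞(Ω)} · ‖u₁‖_{L²(Ω;ℝᵈ)} · ‖u₂‖_{L²(Ω;ℝᵈ)}. -/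
open MeasureTheory RealInnerProductSpace

noncomputable section

/-! Write `a = κ₁^{-1/2}` and `b = κ₂^{-1/2}`. Pointwise,
`‖a u₁ - b u₂‖² = (a - b)² ⟪u₁, u₂⟫ + a² (‖u₁‖² - ⟪u₁, u₂⟫) + b² (‖u₂‖² - ⟪u₂, u₁⟫)`,
and the two hypotheses say exactly that the last two terms integrate to zero. What remains is
bounded by `‖a - b‖²_∞ ∫ ‖u₁‖ ‖u₂‖`, and Cauchy–Schwarz in `L²` finishes. -/

section

variable {Ω E : Type*} [MeasurableSpace Ω] {μ : Measure Ω}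

theorem MeasureTheory.MemLp.sq_top {a : Ω → ℝ} (ha : MemLp a ⊤ μ) :
    MemLp (fun x => a x ^ 2) ⊤ μ := by
  simpa only [sq] using ha.mul' ha (r := ⊤)

theorem MeasureTheory.Lp.integral_norm_mul_norm_le [NormedAddCommGroup E] (u₁ u₂ : Lp E 2 μ) :
    ∫ x, ‖u₁ x‖ * ‖u₂ x‖ ∂μ ≤ ‖u₁‖ * ‖u₂‖ := by
  have hnorm : ∀ u : Lp E 2 μ, (∫ x, ‖u x‖ ^ (2 : ℝ) ∂μ) ^ (1 / (2 : ℝ)) = ‖u‖ := fun u => by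
    rw [Lp.norm_def, toReal_eLpNorm (Lp.aestronglyMeasurable u),
      lpNorm_eq_integral_norm_rpow_toReal two_ne_zero ENNReal.ofNat_ne_top
        (Lp.aestronglyMeasurable u)]
    norm_num
  have h := integral_mul_norm_le_Lp_mul_Lq Real.HolderConjugate.two_two
    (f := u₁) (g := u₂) (by simpa using Lp.memLp u₁) (by simpa using Lp.memLp u₂)
  rwa [hnorm, hnorm] at h

variable [NormedAddCommGroup E] [InnerProductSpace ℝ E]

theorem norm_smul_sub_smul_sq_eq (a b : ℝ) (x y : E) :
    ‖a • x - b • y‖ ^ 2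
      = (a - b) ^ 2 * ⟪x, y⟫ + a ^ 2 * (‖x‖ ^ 2 - ⟪x, y⟫) + b ^ 2 * (‖y‖ ^ 2 - ⟪y, x⟫) := by
  rw [norm_sub_sq_real, norm_smul, norm_smul, real_inner_smul_left, real_inner_smul_right,
    real_inner_comm y x]
  simp only [Real.norm_eq_abs, mul_pow, sq_abs]
  ring

theorem MeasureTheory.Lp.integrable_mul_inner {w : Ω → ℝ} (hw : MemLp w ⊤ μ)
    (u₁ u₂ : Lp E 2 μ) : Integrable (fun x => w x * ⟪u₁ x, u₂ x⟫) μ :=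
  (L2.integrable_inner u₁ u₂).mul_of_top_right hw

theorem MeasureTheory.Lp.integrable_mul_norm_sq {w : Ω → ℝ} (hw : MemLp w ⊤ μ)
    (u : Lp E 2 μ) : Integrable (fun x => w x * ‖u x‖ ^ 2) μ := by
  simpa only [real_inner_self_eq_norm_sq] using integrable_mul_inner hw u u

theorem MeasureTheory.Lp.integral_mul_inner_le {w : Ω → ℝ} {M : ℝ} (hM : 0 ≤ M)
    (hw : ∀ᵐ x ∂μ, |w x| ≤ M) (u₁ u₂ : Lp E 2 μ) :
    ∫ x, w x * ⟪u₁ x, u₂ x⟫ ∂μ ≤ M * ‖u₁‖ * ‖u₂‖ := by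
  have hbound : ∀ᵐ x ∂μ, ‖w x * ⟪u₁ x, u₂ x⟫‖ ≤ M * (‖u₁ x‖ * ‖u₂ x‖) := by
    filter_upwards [hw] with x hx
    rw [norm_mul, Real.norm_eq_abs]
    exact mul_le_mul hx (norm_inner_le_norm _ _) (norm_nonneg _) hM
  calc ∫ x, w x * ⟪u₁ x, u₂ x⟫ ∂μ ≤ ‖∫ x, w x * ⟪u₁ x, u₂ x⟫ ∂μ‖ := Real.le_norm_self _
    _ ≤ ∫ x, M * (‖u₁ x‖ * ‖u₂ x‖) ∂μ :=
      norm_integral_le_of_norm_le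
        (((Lp.memLp u₁).norm.integrable_mul (Lp.memLp u₂).norm).const_mul M) hbound
    _ = M * ∫ x, ‖u₁ x‖ * ‖u₂ x‖ ∂μ := integral_const_mul _ _
    _ ≤ M * (‖u₁‖ * ‖u₂‖) := mul_le_mul_of_nonneg_left (integral_norm_mul_norm_le u₁ u₂) hM
    _ = M * ‖u₁‖ * ‖u₂‖ := (mul_assoc _ _ _).symm

theorem MeasureTheory.Lp.integral_norm_smul_sub_smul_sq {a b : Ω → ℝ} (ha : MemLp a ⊤ μ)
    (hb : MemLp b ⊤ μ) (u₁ u₂ : Lp E 2 μ)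
    (h₁ : ∫ x, a x ^ 2 * ⟪u₁ x, u₂ x⟫ ∂μ = ∫ x, a x ^ 2 * ‖u₁ x‖ ^ 2 ∂μ)
    (h₂ : ∫ x, b x ^ 2 * ⟪u₂ x, u₁ x⟫ ∂μ = ∫ x, b x ^ 2 * ‖u₂ x‖ ^ 2 ∂μ) :
    ∫ x, ‖a x • u₁ x - b x • u₂ x‖ ^ 2 ∂μ = ∫ x, (a x - b x) ^ 2 * ⟪u₁ x, u₂ x⟫ ∂μ := by
  have iD : Integrable (fun x => (a x - b x) ^ 2 * ⟪u₁ x, u₂ x⟫) μ :=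
    integrable_mul_inner (ha.sub hb).sq_top u₁ u₂
  have iA₁ := integrable_mul_norm_sq ha.sq_top u₁
  have iA₂ := integrable_mul_inner ha.sq_top u₁ u₂
  have iB₁ := integrable_mul_norm_sq hb.sq_top u₂
  have iB₂ := integrable_mul_inner hb.sq_top u₂ u₁
  have hsplit : ∫ x, ‖a x • u₁ x - b x • u₂ x‖ ^ 2 ∂μ
      = ∫ x, (a x - b x) ^ 2 * ⟪u₁ x, u₂ x⟫ ∂μ
        + (∫ x, a x ^ 2 * ‖u₁ x‖ ^ 2 ∂μ - ∫ x, a x ^ 2 * ⟪u₁ x, u₂ x⟫ ∂μ)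
        + (∫ x, b x ^ 2 * ‖u₂ x‖ ^ 2 ∂μ - ∫ x, b x ^ 2 * ⟪u₂ x, u₁ x⟫ ∂μ) := by
    simp only [norm_smul_sub_smul_sq_eq, mul_sub]
    have iA : Integrable (fun x => a x ^ 2 * ‖u₁ x‖ ^ 2 - a x ^ 2 * ⟪u₁ x, u₂ x⟫) μ :=
      iA₁.sub iA₂
    have iB : Integrable (fun x => b x ^ 2 * ‖u₂ x‖ ^ 2 - b x ^ 2 * ⟪u₂ x, u₁ x⟫) μ :=
      iB₁.sub iB₂
    rw [integral_add (iD.fun_add iA) iB, integral_add iD iA,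
      integral_sub iA₁ iA₂, integral_sub iB₁ iB₂]
  rw [hsplit, h₁, h₂, sub_self, sub_self, add_zero, add_zero]

theorem MeasureTheory.Lp.integral_norm_smul_sub_smul_sq_le {a b : Ω → ℝ} (ha : MemLp a ⊤ μ)
    (hb : MemLp b ⊤ μ) (u₁ u₂ : Lp E 2 μ)
    (h₁ : ∫ x, a x ^ 2 * ⟪u₁ x, u₂ x⟫ ∂μ = ∫ x, a x ^ 2 * ‖u₁ x‖ ^ 2 ∂μ)
    (h₂ : ∫ x, b x ^ 2 * ⟪u₂ x, u₁ x⟫ ∂μ = ∫ x, b x ^ 2 * ‖u₂ x‖ ^ 2 ∂μ) :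
    ∫ x, ‖a x • u₁ x - b x • u₂ x‖ ^ 2 ∂μ
      ≤ (eLpNorm (fun x => a x - b x) ⊤ μ).toReal ^ 2 * ‖u₁‖ * ‖u₂‖ := by
  have hab : MemLp (fun x => a x - b x) ⊤ μ := ha.sub hb
  rw [integral_norm_smul_sub_smul_sq ha hb u₁ u₂ h₁ h₂, toReal_eLpNorm hab.1]
  refine integral_mul_inner_le (sq_nonneg _) ?_ u₁ u₂
  filter_upwards [ae_le_lpNorm_exponent_top hab] with x hx
  rw [abs_sq, ← sq_abs]
  exact pow_le_pow_left₀ (abs_nonneg _) hx 2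

end

theorem memLp_top_inv_sqrt {Ω : Type*} [MeasurableSpace Ω] {μ : Measure Ω} {κ : Ω → ℝ}
    (hκ : Measurable κ) {c : ℝ} (hc : 0 < c) (hκc : ∀ᵐ x ∂μ, c ≤ κ x) :
    MemLp (fun x => (Real.sqrt (κ x))⁻¹) ⊤ μ := by
  refine memLp_top_of_bound hκ.sqrt.inv.aestronglyMeasurable (Real.sqrt c)⁻¹ ?_
  filter_upwards [hκc] with x hx
  rw [Real.norm_eq_abs, abs_of_nonneg (inv_nonneg.2 (Real.sqrt_nonneg _))]
  exact inv_anti₀ (Real.sqrt_pos.2 hc) (Real.sqrt_le_sqrt hx)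

theorem integral_inv_sqrt_sq_mul {Ω : Type*} [MeasurableSpace Ω] {μ : Measure Ω} {κ : Ω → ℝ}
    (hκ : ∀ᵐ x ∂μ, 0 ≤ κ x) (f : Ω → ℝ) :
    ∫ x, (Real.sqrt (κ x))⁻¹ ^ 2 * f x ∂μ = ∫ x, (κ x)⁻¹ * f x ∂μ :=
  integral_congr_ae (by filter_upwards [hκ] with x hx; rw [inv_pow, Real.sq_sqrt hx])

/-- under the cross-symmetry identities,
`‖κ₁^{-1/2} u₁ − κ₂^{-1/2} u₂‖²_{L²} ≤ ‖κ₁^{-1/2} − κ₂^{-1/2}‖²_{L^∞} ‖u₁‖_{L²} ‖u₂‖_{L²}`. -/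
theorem stmt5 {Ω : Type*} [MeasurableSpace Ω] {μ : Measure Ω} {d : ℕ}
    (u₁ u₂ : Lp (EuclideanSpace ℝ (Fin d)) 2 μ)
    (κ₁ κ₂ : Ω → ℝ) (hκ₁ : Measurable κ₁) (hκ₂ : Measurable κ₂)
    (κ_min : ℝ) (hκ_min : 0 < κ_min)
    (hκ₁_ae : ∀ᵐ x ∂μ, κ_min ≤ κ₁ x) (hκ₂_ae : ∀ᵐ x ∂μ, κ_min ≤ κ₂ x)
    (h₂ : ∫ x, (κ₂ x)⁻¹ * ⟪u₂ x, u₁ x⟫ ∂μ = ∫ x, (κ₂ x)⁻¹ * ‖u₂ x‖ ^ 2 ∂μ)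
    (h₁ : ∫ x, (κ₁ x)⁻¹ * ⟪u₁ x, u₂ x⟫ ∂μ = ∫ x, (κ₁ x)⁻¹ * ‖u₁ x‖ ^ 2 ∂μ) :
    ∫ x, ‖(Real.sqrt (κ₁ x))⁻¹ • u₁ x - (Real.sqrt (κ₂ x))⁻¹ • u₂ x‖ ^ 2 ∂μ
      ≤ (eLpNorm (fun x => (Real.sqrt (κ₁ x))⁻¹ - (Real.sqrt (κ₂ x))⁻¹) ⊤ μ).toReal ^ 2
          * ‖u₁‖ * ‖u₂‖ := by
  have hκ₁_nonneg : ∀ᵐ x ∂μ, 0 ≤ κ₁ x := hκ₁_ae.mono fun x hx => hκ_min.le.trans hx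
  have hκ₂_nonneg : ∀ᵐ x ∂μ, 0 ≤ κ₂ x := hκ₂_ae.mono fun x hx => hκ_min.le.trans hx
  refine Lp.integral_norm_smul_sub_smul_sq_le (memLp_top_inv_sqrt hκ₁ hκ_min hκ₁_ae)
    (memLp_top_inv_sqrt hκ₂ hκ_min hκ₂_ae) u₁ u₂ ?_ ?_
  · rwa [integral_inv_sqrt_sq_mul hκ₁_nonneg, integral_inv_sqrt_sq_mul hκ₁_nonneg]
  · rwa [integral_inv_sqrt_sq_mul hκ₂_nonneg, integral_inv_sqrt_sq_mul hκ₂_nonneg]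
end
end

section
/- (Theorem 4.5, abstract generalization-error estimate.) Consider a fine mixed Galerkin setup (V_f, Q_f, D) and a multiscale mixed Galerkin setup (V_ms, Q_ms, D restricted to V_ms) with V_ms ⊆ V_f and Q_ms ⊆ Q_f. Assume: (i) the discrete Poincaré inequality holds on V_f with constant C_P > 0 (hence also on V_ms); (ii) the fine pair (V_f, Q_f) satisfies the inf-sup condition with constant C_f > 0 and the multiscale pair (V_ms, Q_ms) satisfies it with constant C_ms > 0. Let κ₁, κ₂ : Ω → ℝ be measurable with κᵢ ≥ κ_{i,min} > 0 a.e., and let f₁, f₂ ∈ L²(Ω). For i, j ∈ {1,2} let (u_f^{i,j}, p_f^{i,j}) ∈ V_f × Q_f denote a mixed Galerkin solution for (κ_i, f_j) in the fine spaces, and (u_ms^{i,j}, p_ms^{i,j}) ∈ V_ms × Q_ms a mixed Galerkin solution in the multiscale spaces. Suppose the multiscale approximation error for the training pair satisfies ‖u_f^{1,1} − u_ms^{1,1}‖_{κ₁⁻¹,Ω} ≤ ε for some ε ≥ 0. Then ‖u_f^{2,2} − u_ms^{2,2}‖_{κ₂⁻¹,Ω} ≤ 2 C_P ‖κ₂^{-1/2}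 − κ₁^{-1/2}‖_{L^∞(Ω)} ‖f₂‖_{L²(Ω)} + (C_f + C_ms) κ_{1,min}^{-1/2} ‖f₁ − f₂‖_{L²(Ω)} + ε. -/
open MeasureTheory RealInnerProductSpace

noncomputable section
/-- A mixed Galerkin setup: a velocity subspace `V ⊆ L²(Ω;ℝᵈ)`, a pressure subspace
`Q ⊆ L²(Ω)`, and a linear discrete divergence `D : V → L²(Ω)` with range contained in `Q`. -/
structure MixedGalerkinSetup {Ω : Type*} [MeasurableSpace Ω] (μ : Measure Ω) (d : ℕ) where
  V : Submodule ℝ (Lp (EuclideanSpace ℝ (Fin d)) 2 μ)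
  Q : Submodule ℝ (Lp ℝ 2 μ)
  D : V →ₗ[ℝ] Lp ℝ 2 μ
  D_mem_Q : ∀ v : V, D v ∈ Q

/-- `(u, p) ∈ V × Q` is a mixed Galerkin solution for the coefficient `κ` and source `f`:
`∫ κ⁻¹ u·v − ∫ (Dv) p = 0` for all `v ∈ V` and `∫ (Du) q = ∫ f q` for all `q ∈ Q`. -/
def IsMGSolution {Ω : Type*} [MeasurableSpace Ω] {μ : Measure Ω} {d : ℕ}
    (S : MixedGalerkinSetup μ d) (κ : Ω → ℝ) (f : Lp ℝ 2 μ)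
    (u : S.V) (p : S.Q) : Prop :=
  (∀ v : S.V,
      ∫ x, (κ x)⁻¹ * ⟪(u : Lp (EuclideanSpace ℝ (Fin d)) 2 μ) x,
          (v : Lp (EuclideanSpace ℝ (Fin d)) 2 μ) x⟫ ∂μ
        - ∫ x, (S.D v) x * (p : Lp ℝ 2 μ) x ∂μ = 0) ∧
  (∀ q : S.Q, ∫ x, (S.D u) x * (q : Lp ℝ 2 μ) x ∂μ = ∫ x, f x * (q : Lp ℝ 2 μ) x ∂μ)


/-! Since the discrete divergence maps `V` into `Q` and is injective (discrete Poincaré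
inequality), the second Galerkin equation fixes `D u` as the `Q`-projection of `f`, so the
velocity does not depend on the coefficient: `u^{2,2} = u^{1,2}` in both spaces.

Write the `κ⁻¹`-weighted norm as the `L²` norm of `w • u` with `w = κ^{-1/2} ∈ L^∞`. Changing
the weight from `κ₁` to `κ₂` then costs `‖w₂ - w₁‖_∞ ‖u_f^{1,2} - u_ms^{1,2}‖`, and
`‖u_f^{1,2} - u_ms^{1,2}‖ ≤ 2 C_P ‖f₂‖` by Poincaré and `‖D u‖ ≤ ‖f‖`. The remaining
`κ₁`-weighted error passes through the training pair by the triangle inequality; in each space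
the change of source `f₁ → f₂` is controlled by the energy identity
`‖w • δu‖² = ⟪f₁ - f₂, δp⟫` for `δu = u^{1,1} - u^{1,2}` together with the inf-sup bound
`‖δp‖ ≤ C ‖w‖_∞ ‖w • δu‖`. -/

open scoped ENNReal

local notation "L²[" μ ", " d "]" => Lp (EuclideanSpace ℝ (Fin d)) 2 μ

namespace MeasureTheory.Lp

variable {Ω E : Type*} [MeasurableSpace Ω] {μ : Measure Ω}

lemma integral_mul_eq_inner (f g : Lp ℝ 2 μ) : ∫ x, f x * g x ∂μ = ⟪f, g⟫ := by
  simp only [L2.inner_def, RCLike.inner_apply, conj_trivial, mul_comm]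

lemma norm_toLp_top_le [NormedAddCommGroup E] {f : Ω → E} (hf : MemLp f ∞ μ) {C : ℝ}
    (hC : 0 ≤ C) (hfC : ∀ᵐ x ∂μ, ‖f x‖ ≤ C) : ‖hf.toLp f‖ ≤ C := by
  rw [Lp.norm_toLp, eLpNorm_exponent_top]
  exact ENNReal.toReal_le_of_le_ofReal hC (eLpNormEssSup_le_of_ae_bound hfC)

section HolderSMul

variable {𝕜 : Type*} [NormedRing 𝕜] [NormedAddCommGroup E] [Module 𝕜 E] [IsBoundedSMul 𝕜 E]
  {p q r : ℝ≥0∞} [ENNReal.HolderTriple p q r]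

protected lemma smul_sub (f : Lp 𝕜 p μ) (g₁ g₂ : Lp E q μ) :
    (f • (g₁ - g₂) : Lp E r μ) = f • g₁ - f • g₂ := by
  rw [sub_eq_add_neg, Lp.add_smul, Lp.smul_neg, ← sub_eq_add_neg]

lemma norm_smul_le_norm_smul_add [Fact (1 ≤ r)] (f₁ f₂ : Lp 𝕜 p μ) (g : Lp E q μ) :
    ‖(f₂ • g : Lp E r μ)‖ ≤ ‖(f₁ • g : Lp E r μ)‖ + ‖f₂ - f₁‖ * ‖g‖ :=
  calc ‖(f₂ • g : Lp E r μ)‖ = ‖(f₁ • g + (f₂ - f₁) • g : Lp E r μ)‖ := by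
        rw [← Lp.smul_add, add_sub_cancel]
    _ ≤ _ := (norm_add_le _ _).trans (add_le_add_right (Lp.norm_smul_le _ _) _)

end HolderSMul

variable [NormedAddCommGroup E] [InnerProductSpace ℝ E] {κ : Ω → ℝ} {w : Lp ℝ ∞ μ}

lemma integral_inv_mul_inner_eq_inner_smul (hw : ∀ᵐ x ∂μ, w x ^ 2 = (κ x)⁻¹)
    (u v : Lp E 2 μ) : ∫ x, (κ x)⁻¹ * ⟪u x, v x⟫ ∂μ = ⟪(w • u : Lp E 2 μ), w • v⟫ := by
  rw [L2.inner_def]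
  refine integral_congr_ae ?_
  filter_upwards [hw, Lp.coeFn_lpSMul (r := 2) w u, Lp.coeFn_lpSMul (r := 2) w v]
    with x hx hu hv
  rw [hu, hv, Pi.smul_apply', Pi.smul_apply', real_inner_smul_left, real_inner_smul_right, ← hx]
  ring

lemma sqrt_integral_inv_mul_norm_sub_sq (hw : ∀ᵐ x ∂μ, w x ^ 2 = (κ x)⁻¹) (u v : Lp E 2 μ) :
    √(∫ x, (κ x)⁻¹ * ‖u x - v x‖ ^ 2 ∂μ) = ‖(w • u : Lp E 2 μ) - w • v‖ := by
  have hsub : ∫ x, (κ x)⁻¹ * ‖u x - v x‖ ^ 2 ∂μ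
      = ∫ x, (κ x)⁻¹ * ⟪(u - v) x, (u - v) x⟫ ∂μ := by
    refine integral_congr_ae ?_
    filter_upwards [Lp.coeFn_sub u v] with x hx
    rw [hx, Pi.sub_apply, real_inner_self_eq_norm_sq]
  rw [hsub, integral_inv_mul_inner_eq_inner_smul hw, real_inner_self_eq_norm_sq,
    Real.sqrt_sq (norm_nonneg _), Lp.smul_sub]

lemma exists_ae_eq_inv_sqrt {κ_min : ℝ} (hκ : AEMeasurable κ μ) (hmin : 0 < κ_min)
    (hae : ∀ᵐ x ∂μ, κ_min ≤ κ x) :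
    ∃ w : Lp ℝ ∞ μ, w =ᵐ[μ] (fun x => (√(κ x))⁻¹) ∧ (∀ᵐ x ∂μ, w x ^ 2 = (κ x)⁻¹) ∧
      ‖w‖ ≤ (√κ_min)⁻¹ := by
  have hbound : ∀ᵐ x ∂μ, ‖(√(κ x))⁻¹‖ ≤ (√κ_min)⁻¹ := by
    filter_upwards [hae] with x hx
    rw [Real.norm_of_nonneg (by positivity)]
    exact inv_anti₀ (Real.sqrt_pos.2 hmin) (Real.sqrt_le_sqrt hx)
  have hmem : MemLp (fun x => (√(κ x))⁻¹) ∞ μ :=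
    memLp_top_of_bound hκ.sqrt.inv.aestronglyMeasurable _ hbound
  refine ⟨hmem.toLp _, hmem.coeFn_toLp, ?_, norm_toLp_top_le hmem (by positivity) hbound⟩
  filter_upwards [hmem.coeFn_toLp, hae] with x hx hκx
  rw [hx, inv_pow, Real.sq_sqrt (hmin.le.trans hκx)]

end MeasureTheory.Lp

namespace MixedGalerkinSetup

variable {Ω : Type*} [MeasurableSpace Ω] {μ : Measure Ω} {d : ℕ}

def DiscretePoincare (S : MixedGalerkinSetup μ d) (C : ℝ) : Prop :=
  ∀ v : S.V, ‖(v : L²[μ, d])‖ ≤ C * ‖S.D v‖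

def hdivNorm (S : MixedGalerkinSetup μ d) (v : S.V) : ℝ :=
  √(‖(v : L²[μ, d])‖ ^ 2 + ‖S.D v‖ ^ 2)

def InfSup (S : MixedGalerkinSetup μ d) (C : ℝ) : Prop :=
  ∀ q : Lp ℝ 2 μ, q ∈ S.Q →
    ‖q‖ ≤ C * ⨆ v : {v : S.V // v ≠ 0}, (∫ x, (S.D v.1) x * q x ∂μ) / S.hdivNorm v.1

variable {S S' : MixedGalerkinSetup μ d} {C : ℝ}

lemma DiscretePoincare.injective (h : S.DiscretePoincare C) : Function.Injective S.D := by
  refine (injective_iff_map_eq_zero S.D).2 fun v hv => Subtype.ext ?_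
  simpa [hv] using h v

lemma DiscretePoincare.of_le (hV : S'.V ≤ S.V)
    (hD : ∀ v : S'.V, S'.D v = S.D ⟨(v : L²[μ, d]), hV v.2⟩)
    (h : S.DiscretePoincare C) : S'.DiscretePoincare C :=
  fun v => hD v ▸ h ⟨v, hV v.2⟩

lemma InfSup.norm_le {K : ℝ} (h : S.InfSup C) (hC : 0 ≤ C) (hK : 0 ≤ K) {q : Lp ℝ 2 μ}
    (hq : q ∈ S.Q) (hbound : ∀ v : S.V, ⟪S.D v, q⟫ ≤ K * ‖(v : L²[μ, d])‖) :
    ‖q‖ ≤ C * K := by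
  refine (h q hq).trans (mul_le_mul_of_nonneg_left (Real.iSup_le (fun ⟨v, hv⟩ => ?_) hK) hC)
  have hpos : 0 < ‖(v : L²[μ, d])‖ := by simpa using hv
  have hle : ‖(v : L²[μ, d])‖ ≤ S.hdivNorm v :=
    Real.le_sqrt_of_sq_le (le_add_of_nonneg_right (sq_nonneg _))
  rw [div_le_iff₀ (hpos.trans_le hle), Lp.integral_mul_eq_inner]
  exact (hbound v).trans (mul_le_mul_of_nonneg_left hle hK)

end MixedGalerkinSetup

namespace IsMGSolution

variable {Ω : Type*} [MeasurableSpace Ω] {μ : Measure Ω} {d : ℕ} {S : MixedGalerkinSetup μ d}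
  {κ κ' : Ω → ℝ} {f f' : Lp ℝ 2 μ} {u u' : S.V} {p p' : S.Q} {w : Lp ℝ ∞ μ} {C : ℝ}

lemma inner_D_eq (h : IsMGSolution S κ f u p) (q : S.Q) :
    ⟪S.D u, (q : Lp ℝ 2 μ)⟫ = ⟪f, (q : Lp ℝ 2 μ)⟫ := by
  simpa only [Lp.integral_mul_eq_inner] using h.2 q

lemma inner_smul_eq (h : IsMGSolution S κ f u p) (hw : ∀ᵐ x ∂μ, w x ^ 2 = (κ x)⁻¹) (v : S.V) :
    ⟪(w • (u : L²[μ, d]) : L²[μ, d]), w • (v : L²[μ, d])⟫ = ⟪S.D v, (p : Lp ℝ 2 μ)⟫ := by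
  rw [← Lp.integral_inv_mul_inner_eq_inner_smul hw, ← Lp.integral_mul_eq_inner]
  exact sub_eq_zero.1 (h.1 v)

lemma norm_D_le (h : IsMGSolution S κ f u p) : ‖S.D u‖ ≤ ‖f‖ := by
  have hsq : ‖S.D u‖ ^ 2 ≤ ‖f‖ * ‖S.D u‖ := by
    rw [← real_inner_self_eq_norm_sq, h.inner_D_eq ⟨S.D u, S.D_mem_Q u⟩]
    exact real_inner_le_norm _ _
  nlinarith [norm_nonneg (S.D u), norm_nonneg f]

lemma norm_le (h : IsMGSolution S κ f u p) (hP : S.DiscretePoincare C) (hC : 0 ≤ C) :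
    ‖(u : L²[μ, d])‖ ≤ C * ‖f‖ :=
  (hP u).trans (mul_le_mul_of_nonneg_left h.norm_D_le hC)

lemma eq_of_injective (hD : Function.Injective S.D) (h : IsMGSolution S κ f u p)
    (h' : IsMGSolution S κ' f u' p') : u = u' := by
  have horth : ⟪S.D (u - u'), S.D (u - u')⟫ = 0 := by
    have h₁ := h.inner_D_eq ⟨_, S.D_mem_Q (u - u')⟩
    have h₂ := h'.inner_D_eq ⟨_, S.D_mem_Q (u - u')⟩
    nth_rw 1 [map_sub]
    rw [inner_sub_left, h₁, h₂, sub_self]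
  exact sub_eq_zero.1 (hD ((inner_self_eq_zero.1 horth).trans (map_zero S.D).symm))

lemma norm_smul_sub_le (hS : S.InfSup C) (hC : 0 ≤ C) (hw : ∀ᵐ x ∂μ, w x ^ 2 = (κ x)⁻¹)
    (h : IsMGSolution S κ f u p) (h' : IsMGSolution S κ f' u' p') :
    ‖(w • (u : L²[μ, d]) : L²[μ, d]) - w • (u' : L²[μ, d])‖ ≤ C * ‖w‖ * ‖f - f'‖ := by
  set e : L²[μ, d] := w • (u : L²[μ, d]) - w • (u' : L²[μ, d])
  set δp : Lp ℝ 2 μ := ((p - p' : S.Q) : Lp ℝ 2 μ)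
  have horth (v : S.V) : ⟪e, w • (v : L²[μ, d])⟫ = ⟪S.D v, δp⟫ := by
    rw [inner_sub_left, h.inner_smul_eq hw, h'.inner_smul_eq hw, ← inner_sub_right]
    rfl
  have henergy : ‖e‖ ^ 2 = ⟪f - f', δp⟫ := by
    rw [← real_inner_self_eq_norm_sq]
    calc ⟪e, e⟫ = ⟪e, w • (u : L²[μ, d])⟫ - ⟪e, w • (u' : L²[μ, d])⟫ := inner_sub_right _ _ _
      _ = ⟪f - f', δp⟫ := by rw [horth, horth, h.inner_D_eq, h'.inner_D_eq, inner_sub_left]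
  have hδp : ‖δp‖ ≤ C * (‖w‖ * ‖e‖) := by
    refine hS.norm_le hC (by positivity) (p - p').2 fun v => ?_
    rw [← horth]
    calc ⟪e, w • (v : L²[μ, d])⟫ ≤ ‖e‖ * ‖(w • (v : L²[μ, d]) : L²[μ, d])‖ :=
          real_inner_le_norm _ _
      _ ≤ ‖e‖ * (‖w‖ * ‖(v : L²[μ, d])‖) := by gcongr; exact Lp.norm_smul_le _ _
      _ = ‖w‖ * ‖e‖ * ‖(v : L²[μ, d])‖ := by ring
  have hsq : ‖e‖ ^ 2 ≤ C * ‖w‖ * ‖f - f'‖ * ‖e‖ := by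
    rw [henergy]
    calc ⟪f - f', δp⟫ ≤ ‖f - f'‖ * ‖δp‖ := real_inner_le_norm _ _
      _ ≤ ‖f - f'‖ * (C * (‖w‖ * ‖e‖)) := by gcongr
      _ = C * ‖w‖ * ‖f - f'‖ * ‖e‖ := by ring
  nlinarith [norm_nonneg e, (by positivity : 0 ≤ C * ‖w‖ * ‖f - f'‖)]

end IsMGSolution

open MixedGalerkinSetup

theorem stmt10_general {Ω : Type*} [MeasurableSpace Ω] {μ : Measure Ω} {d : ℕ}
    (Sf Sms : MixedGalerkinSetup μ d)
    (hV : Sms.V ≤ Sf.V)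
    (hD : ∀ v : Sms.V, Sms.D v = Sf.D ⟨(v : Lp (EuclideanSpace ℝ (Fin d)) 2 μ), hV v.2⟩)
    -- (i) discrete Poincaré inequality on the fine space (hence also on `V_ms`)
    (C_P : ℝ) (hC_P : 0 < C_P)
    (hPoincare : ∀ v : Sf.V, ‖(v : Lp (EuclideanSpace ℝ (Fin d)) 2 μ)‖ ≤ C_P * ‖Sf.D v‖)
    -- (ii) inf-sup conditions for the fine and multiscale pairs
    (C_f : ℝ) (hC_f : 0 < C_f)
    (hinfsup_f : ∀ q : Lp ℝ 2 μ, q ∈ Sf.Q →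
      ‖q‖ ≤ C_f * ⨆ v : {v : Sf.V // v ≠ 0},
        (∫ x, (Sf.D v.1) x * q x ∂μ) /
          Real.sqrt (‖(v.1 : Lp (EuclideanSpace ℝ (Fin d)) 2 μ)‖ ^ 2 + ‖Sf.D v.1‖ ^ 2))
    (C_ms : ℝ) (hC_ms : 0 < C_ms)
    (hinfsup_ms : ∀ q : Lp ℝ 2 μ, q ∈ Sms.Q →
      ‖q‖ ≤ C_ms * ⨆ v : {v : Sms.V // v ≠ 0},
        (∫ x, (Sms.D v.1) x * q x ∂μ) /
          Real.sqrt (‖(v.1 : Lp (EuclideanSpace ℝ (Fin d)) 2 μ)‖ ^ 2 + ‖Sms.D v.1‖ ^ 2))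
    -- coefficients and sources
    (κ₁ κ₂ : Ω → ℝ) (hκ₁ : Measurable κ₁) (hκ₂ : Measurable κ₂)
    (κ₁_min κ₂_min : ℝ) (hκ₁_min : 0 < κ₁_min) (hκ₂_min : 0 < κ₂_min)
    (hκ₁_ae : ∀ᵐ x ∂μ, κ₁_min ≤ κ₁ x) (hκ₂_ae : ∀ᵐ x ∂μ, κ₂_min ≤ κ₂ x)
    (f₁ f₂ : Lp ℝ 2 μ)
    -- fine-grid mixed Galerkin solutions for `(κ_i, f_j)`, `i, j ∈ {1,2}`
    (uf11 uf12 uf22 : Sf.V) (pf11 pf12 pf22 : Sf.Q)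
    (hf11 : IsMGSolution Sf κ₁ f₁ uf11 pf11) (hf12 : IsMGSolution Sf κ₁ f₂ uf12 pf12)
    (hf22 : IsMGSolution Sf κ₂ f₂ uf22 pf22)
    -- multiscale mixed Galerkin solutions for `(κ_i, f_j)`, `i, j ∈ {1,2}`
    (ums11 ums12 ums22 : Sms.V) (pms11 pms12 pms22 : Sms.Q)
    (hms11 : IsMGSolution Sms κ₁ f₁ ums11 pms11) (hms12 : IsMGSolution Sms κ₁ f₂ ums12 pms12)
    (hms22 : IsMGSolution Sms κ₂ f₂ ums22 pms22)
    -- training-stage multiscale approximation error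
    (ε : ℝ)
    (htrain : Real.sqrt (∫ x, (κ₁ x)⁻¹ * ‖(uf11 : Lp (EuclideanSpace ℝ (Fin d)) 2 μ) x
        - (ums11 : Lp (EuclideanSpace ℝ (Fin d)) 2 μ) x‖ ^ 2 ∂μ) ≤ ε) :
    Real.sqrt (∫ x, (κ₂ x)⁻¹ * ‖(uf22 : Lp (EuclideanSpace ℝ (Fin d)) 2 μ) x
        - (ums22 : Lp (EuclideanSpace ℝ (Fin d)) 2 μ) x‖ ^ 2 ∂μ)
      ≤ 2 * C_P * (eLpNorm (fun x => (Real.sqrt (κ₂ x))⁻¹ - (Real.sqrt (κ₁ x))⁻¹) ⊤ μ).toReal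
            * ‖f₂‖
        + (C_f + C_ms) * (Real.sqrt κ₁_min)⁻¹ * ‖f₁ - f₂‖ + ε := by
  obtain ⟨w₁, hw₁, hw₁_sq, hw₁_le⟩ := Lp.exists_ae_eq_inv_sqrt hκ₁.aemeasurable hκ₁_min hκ₁_ae
  obtain ⟨w₂, hw₂, hw₂_sq, -⟩ := Lp.exists_ae_eq_inv_sqrt hκ₂.aemeasurable hκ₂_min hκ₂_ae
  have hPms : Sms.DiscretePoincare C_P := DiscretePoincare.of_le hV hD hPoincare
  rw [hf22.eq_of_injective (DiscretePoincare.injective hPoincare) hf12,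
    hms22.eq_of_injective hPms.injective hms12, Lp.sqrt_integral_inv_mul_norm_sub_sq hw₂_sq]
  rw [Lp.sqrt_integral_inv_mul_norm_sub_sq hw₁_sq] at htrain
  have hweight : ‖w₂ - w₁‖ = (eLpNorm (fun x => (√(κ₂ x))⁻¹ - (√(κ₁ x))⁻¹) ⊤ μ).toReal := by
    rw [Lp.norm_def, eLpNorm_congr_ae ((Lp.coeFn_sub _ _).trans (hw₂.sub hw₁))]
    rfl
  set g : L²[μ, d] := ↑uf12 - ↑ums12
  have hg : ‖g‖ ≤ 2 * C_P * ‖f₂‖ := by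
    linarith [norm_sub_le (uf12 : L²[μ, d]) ums12,
      hf12.norm_le hPoincare hC_P.le, hms12.norm_le hPms hC_P.le]
  have hsrc_f := (hf11.norm_smul_sub_le hinfsup_f hC_f.le hw₁_sq hf12).trans
    (by gcongr : C_f * ‖w₁‖ * ‖f₁ - f₂‖ ≤ C_f * (√κ₁_min)⁻¹ * ‖f₁ - f₂‖)
  have hsrc_ms := (hms11.norm_smul_sub_le hinfsup_ms hC_ms.le hw₁_sq hms12).trans
    (by gcongr : C_ms * ‖w₁‖ * ‖f₁ - f₂‖ ≤ C_ms * (√κ₁_min)⁻¹ * ‖f₁ - f₂‖)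
  have htrain_path : ‖(w₁ • g : L²[μ, d])‖
      ≤ C_f * (√κ₁_min)⁻¹ * ‖f₁ - f₂‖ + ε + C_ms * (√κ₁_min)⁻¹ * ‖f₁ - f₂‖ := by
    rw [Lp.smul_sub]
    calc _ ≤ _ := norm_sub_le_norm_sub_add_norm_sub _ (w₁ • (uf11 : L²[μ, d]) : L²[μ, d]) _
      _ ≤ _ := add_le_add_right (norm_sub_le_norm_sub_add_norm_sub _
          (w₁ • (ums11 : L²[μ, d]) : L²[μ, d]) _) _
      _ ≤ _ := by rw [norm_sub_rev]; linarith
  calc ‖(w₂ • (uf12 : L²[μ, d]) : L²[μ, d]) - w₂ • (ums12 : L²[μ, d])‖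
      = ‖(w₂ • g : L²[μ, d])‖ := by rw [Lp.smul_sub]
    _ ≤ ‖(w₁ • g : L²[μ, d])‖ + ‖w₂ - w₁‖ * ‖g‖ := Lp.norm_smul_le_norm_smul_add _ _ _
    _ ≤ (C_f * (√κ₁_min)⁻¹ * ‖f₁ - f₂‖ + ε + C_ms * (√κ₁_min)⁻¹ * ‖f₁ - f₂‖)
          + ‖w₂ - w₁‖ * (2 * C_P * ‖f₂‖) := by gcongr
    _ = _ := by rw [hweight]; ring

/-- Theorem 4.5, abstract generalization-error estimate. Fine and multiscale
mixed Galerkin setups with `V_ms ⊆ V_f`, `Q_ms ⊆ Q_f` and the multiscale divergence equal to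
the restriction of the fine one; discrete Poincaré inequality on `V_f` with constant `C_P`;
inf-sup constants `C_f` (fine) and `C_ms` (multiscale). For coefficients `κ₁, κ₂` bounded
below a.e. and sources `f₁, f₂`, with mixed Galerkin solutions `(u_f^{i,j}, p_f^{i,j})` and
`(u_ms^{i,j}, p_ms^{i,j})` for `(κ_i, f_j)`, `i, j ∈ {1,2}`, and training error
`‖u_f^{1,1} − u_ms^{1,1}‖_{κ₁⁻¹,Ω} ≤ ε`, the testing error satisfies
`‖u_f^{2,2} − u_ms^{2,2}‖_{κ₂⁻¹,Ω} ≤ 2 C_P ‖κ₂^{-1/2} − κ₁^{-1/2}‖_∞ ‖f₂‖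
  + (C_f + C_ms) κ_{1,min}^{-1/2} ‖f₁ − f₂‖ + ε`. -/
theorem stmt10 {Ω : Type*} [MeasurableSpace Ω] {μ : Measure Ω} {d : ℕ}
    (Sf Sms : MixedGalerkinSetup μ d)
    (hV : Sms.V ≤ Sf.V) (hQ : Sms.Q ≤ Sf.Q)
    (hD : ∀ v : Sms.V, Sms.D v = Sf.D ⟨(v : Lp (EuclideanSpace ℝ (Fin d)) 2 μ), hV v.2⟩)
    -- (i) discrete Poincaré inequality on the fine space (hence also on `V_ms`)
    (C_P : ℝ) (hC_P : 0 < C_P)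
    (hPoincare : ∀ v : Sf.V, ‖(v : Lp (EuclideanSpace ℝ (Fin d)) 2 μ)‖ ≤ C_P * ‖Sf.D v‖)
    -- (ii) inf-sup conditions for the fine and multiscale pairs
    (C_f : ℝ) (hC_f : 0 < C_f)
    (hinfsup_f : ∀ q : Lp ℝ 2 μ, q ∈ Sf.Q →
      ‖q‖ ≤ C_f * ⨆ v : {v : Sf.V // v ≠ 0},
        (∫ x, (Sf.D v.1) x * q x ∂μ) /
          Real.sqrt (‖(v.1 : Lp (EuclideanSpace ℝ (Fin d)) 2 μ)‖ ^ 2 + ‖Sf.D v.1‖ ^ 2))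
    (C_ms : ℝ) (hC_ms : 0 < C_ms)
    (hinfsup_ms : ∀ q : Lp ℝ 2 μ, q ∈ Sms.Q →
      ‖q‖ ≤ C_ms * ⨆ v : {v : Sms.V // v ≠ 0},
        (∫ x, (Sms.D v.1) x * q x ∂μ) /
          Real.sqrt (‖(v.1 : Lp (EuclideanSpace ℝ (Fin d)) 2 μ)‖ ^ 2 + ‖Sms.D v.1‖ ^ 2))
    -- coefficients and sources
    (κ₁ κ₂ : Ω → ℝ) (hκ₁ : Measurable κ₁) (hκ₂ : Measurable κ₂)
    (κ₁_min κ₂_min : ℝ) (hκ₁_min : 0 < κ₁_min) (hκ₂_min : 0 < κ₂_min)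
    (hκ₁_ae : ∀ᵐ x ∂μ, κ₁_min ≤ κ₁ x) (hκ₂_ae : ∀ᵐ x ∂μ, κ₂_min ≤ κ₂ x)
    (f₁ f₂ : Lp ℝ 2 μ)
    -- fine-grid mixed Galerkin solutions for `(κ_i, f_j)`, `i, j ∈ {1,2}`
    (uf11 uf12 uf21 uf22 : Sf.V) (pf11 pf12 pf21 pf22 : Sf.Q)
    (hf11 : IsMGSolution Sf κ₁ f₁ uf11 pf11) (hf12 : IsMGSolution Sf κ₁ f₂ uf12 pf12)
    (hf21 : IsMGSolution Sf κ₂ f₁ uf21 pf21) (hf22 : IsMGSolution Sf κ₂ f₂ uf22 pf22)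
    -- multiscale mixed Galerkin solutions for `(κ_i, f_j)`, `i, j ∈ {1,2}`
    (ums11 ums12 ums21 ums22 : Sms.V) (pms11 pms12 pms21 pms22 : Sms.Q)
    (hms11 : IsMGSolution Sms κ₁ f₁ ums11 pms11) (hms12 : IsMGSolution Sms κ₁ f₂ ums12 pms12)
    (hms21 : IsMGSolution Sms κ₂ f₁ ums21 pms21) (hms22 : IsMGSolution Sms κ₂ f₂ ums22 pms22)
    -- training-stage multiscale approximation error
    (ε : ℝ) (hε : 0 ≤ ε)
    (htrain : Real.sqrt (∫ x, (κ₁ x)⁻¹ * ‖(uf11 : Lp (EuclideanSpace ℝ (Fin d)) 2 μ) x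
        - (ums11 : Lp (EuclideanSpace ℝ (Fin d)) 2 μ) x‖ ^ 2 ∂μ) ≤ ε) :
    Real.sqrt (∫ x, (κ₂ x)⁻¹ * ‖(uf22 : Lp (EuclideanSpace ℝ (Fin d)) 2 μ) x
        - (ums22 : Lp (EuclideanSpace ℝ (Fin d)) 2 μ) x‖ ^ 2 ∂μ)
      ≤ 2 * C_P * (eLpNorm (fun x => (Real.sqrt (κ₂ x))⁻¹ - (Real.sqrt (κ₁ x))⁻¹) ⊤ μ).toReal
            * ‖f₂‖
        + (C_f + C_ms) * (Real.sqrt κ₁_min)⁻¹ * ‖f₁ - f₂‖ + ε :=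
  stmt10_general Sf Sms hV hD C_P hC_P hPoincare C_f hC_f hinfsup_f C_ms hC_ms hinfsup_ms κ₁ κ₂ hκ₁
    hκ₂ κ₁_min κ₂_min hκ₁_min hκ₂_min hκ₁_ae hκ₂_ae f₁ f₂ uf11 uf12 uf22 pf11 pf12 pf22 hf11 hf12
    hf22 ums11 ums12 ums22 pms11 pms12 pms22 hms11 hms12 hms22 ε htrain
end
end
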